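/- Let q_h > 0 be fixed. Then the function q_l ↦ q_l·q_h·(q_h − q_l)/(4·q_h − q_l)² is monotone nondecreasing on the interval [0, (4/7)·q_h] and monotone nonincreasing on the interval [(4/7)·q_h, q_h]. -/

import Mathlib

/-!
Clearing denominators, `U_l(b) - U_l(a)` has the sign of
`(b - a) · ((16 q_h - 7a)(16 q_h - 7b) - (12 q_h)²)`. Both factors `16 q_h - 7x` equal `12 q_h`
exactly at `x = (4/7) q_h`, exceed it to the left and lie in `[0, 12 q_h]` to the right of it.
-/

/-- `lowUtility qh ql` is the low-quality firm's equilibrium utility `U_l(q_l, q_h)`. -/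
noncomputable def lowUtility (qh ql : ℝ) : ℝ := ql * qh * (qh - ql) / (4 * qh - ql) ^ 2

theorem lowUtility_sub {qh a b : ℝ} (ha : a ≠ 4 * qh) (hb : b ≠ 4 * qh) :
    lowUtility qh b - lowUtility qh a =
      qh ^ 2 * (b - a) * ((16 * qh - 7 * a) * (16 * qh - 7 * b) - (12 * qh) ^ 2) /
        (7 * (4 * qh - a) ^ 2 * (4 * qh - b) ^ 2) := by
  have ha' : 4 * qh - a ≠ 0 := sub_ne_zero.2 (Ne.symm ha)
  have hb' : 4 * qh - b ≠ 0 := sub_ne_zero.2 (Ne.symm hb)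
  rw [lowUtility, lowUtility, div_sub_div _ _ (pow_ne_zero 2 hb') (pow_ne_zero 2 ha'),
    div_eq_div_iff (by positivity) (by positivity)]
  ring

theorem monotoneOn_lowUtility {qh : ℝ} (hqh : 0 < qh) :
    MonotoneOn (lowUtility qh) (Set.Icc 0 (4 / 7 * qh)) := by
  rintro a ⟨ha₀, ha⟩ b ⟨hb₀, hb⟩ hab
  have hfa : 12 * qh ≤ 16 * qh - 7 * a := by linarith
  have hfb : 12 * qh ≤ 16 * qh - 7 * b := by linarith
  have hprod : (12 * qh) ^ 2 ≤ (16 * qh - 7 * a) * (16 * qh - 7 * b) := by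
    rw [sq]; exact mul_le_mul hfa hfb (by linarith) (by linarith)
  rw [← sub_nonneg, lowUtility_sub (by linarith) (by linarith)]
  apply div_nonneg _ (by positivity)
  exact mul_nonneg (mul_nonneg (sq_nonneg qh) (sub_nonneg.2 hab)) (sub_nonneg.2 hprod)

theorem antitoneOn_lowUtility {qh : ℝ} (hqh : 0 < qh) :
    AntitoneOn (lowUtility qh) (Set.Icc (4 / 7 * qh) qh) := by
  rintro a ⟨ha₀, ha⟩ b ⟨hb₀, hb⟩ hab
  have hfa : 16 * qh - 7 * a ≤ 12 * qh := by linarith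
  have hfb : 16 * qh - 7 * b ≤ 12 * qh := by linarith
  have hprod : (16 * qh - 7 * a) * (16 * qh - 7 * b) ≤ (12 * qh) ^ 2 := by
    rw [sq]; exact mul_le_mul hfa hfb (by linarith) (by linarith)
  rw [← sub_nonpos, lowUtility_sub (by linarith) (by linarith)]
  apply div_nonpos_of_nonpos_of_nonneg _ (by positivity)
  exact mul_nonpos_of_nonneg_of_nonpos (mul_nonneg (sq_nonneg qh) (sub_nonneg.2 hab))
    (sub_nonpos.2 hprod)

theorem Ul_unimodal_in_ql (qh : ℝ) (hqh : 0 < qh) :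
    MonotoneOn (fun ql : ℝ => ql * qh * (qh - ql) / (4 * qh - ql) ^ 2)
      (Set.Icc 0 (4 / 7 * qh)) ∧
    AntitoneOn (fun ql : ℝ => ql * qh * (qh - ql) / (4 * qh - ql) ^ 2)
      (Set.Icc (4 / 7 * qh) qh) :=
  ⟨monotoneOn_lowUtility hqh, antitoneOn_lowUtility hqh⟩
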